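/- Let a,b,p ∈ ℝ, c not a nonpositive integer, and let u_n = Σ_{k=0}^{n} ((a)_k(b)_k)/(k!(c)_k)·(-p)_{n-k}/(n-k)! be the coefficients in the power series expansion (1-x)^p F(a,b;c;x) = Σ u_n x^n. Then u_0 = 1, u_1 = ab/c - p, and for all n ≥ 1, u_{n+1} = 2α_n u_n - β_n u_{n-1}, where α_n = (2n² + (a+b+c-2p-1)n + ab - cp)/(2(n+1)(n+c)) and β_n = (n+a-p-1)(n+b-p-1)/((n+1)(n+c)). -/

import Mathlib

open Polynomial

/-- Pochhammer symbol `(a)_n` for real `a`. -/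
noncomputable def poch (a : ℝ) (n : ℕ) : ℝ := (ascPochhammer ℝ n).eval a

/-- Gaussian hypergeometric function `F(a,b;c;z)`. -/
noncomputable def hypF (a b c z : ℝ) : ℝ :=
  ∑' n : ℕ, poch a n * poch b n / poch c n * z ^ n / n.factorial

/-!
In terms of the Euler operator `θ = X d/dX`, the coefficient recurrences of
`F = ∑ (a)ₖ(b)ₖ/(k!(c)ₖ) Xᵏ` and of `G = (1 - X)ᵖ = ∑ (-p)ⱼ/j! Xʲ` are the differential equations
`θ(θ + c - 1)F = X(θ + a)(θ + b)F` and `θG = X(θ - p)G`. Since `θ` is a derivation, eliminating `θG`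
and `θ²G` from `θ(FG)` and `θ²(FG)` gives a second order equation for `W = FG` with coefficients of
degree two in `X`; read off coefficientwise, it is the three-term recurrence.
-/

open PowerSeries

namespace PowerSeries

variable {R : Type*} [CommRing R]

noncomputable def euler : Derivation R R⟦X⟧ R⟦X⟧ := (X : R⟦X⟧) • d⁄dX R

theorem euler_apply (φ : R⟦X⟧) : euler φ = X * d⁄dX R φ := rfl

theorem coeff_euler (φ : R⟦X⟧) (n : ℕ) : coeff n (euler φ) = n * coeff n φ := by
  cases n with
  | zero => simp [euler_apply]
  | succ n => simp [euler_apply, coeff_succ_X_mul, coeff_derivative, mul_comm]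

@[simp]
theorem constantCoeff_euler (φ : R⟦X⟧) : constantCoeff (euler φ) = 0 := by
  rw [← coeff_zero_eq_constantCoeff_apply, coeff_euler, Nat.cast_zero, zero_mul]

theorem euler_C_mul (r : R) (φ : R⟦X⟧) : euler (C r * φ) = C r * euler φ := by
  simp [euler_apply, Derivation.leibniz]

theorem euler_X_mul (φ : R⟦X⟧) : euler (X * φ) = X * φ + X * euler φ := by
  simp only [Derivation.leibniz, euler_apply, smul_eq_mul, derivative_X, mul_one]
  ring

theorem eq_X_mul_of_coeff_succ {φ ψ : R⟦X⟧} (h0 : coeff 0 φ = 0)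
    (h : ∀ n, coeff (n + 1) φ = coeff n ψ) : φ = X * ψ := by
  ext (_ | n)
  · simp [h0]
  · simp [coeff_succ_X_mul, h]

def HypergeometricEq (a b c : R) (φ : R⟦X⟧) : Prop :=
  euler (euler φ) + (C c - 1) * euler φ =
    X * (euler (euler φ) + (C a + C b) * euler φ + C a * C b * φ)

/-- The equation `(1 - X) dψ/dX = -p ψ` of `(1 - X)ᵖ`. -/
def OneSubPowEq (p : R) (ψ : R⟦X⟧) : Prop :=
  euler ψ = X * (euler ψ - C p * ψ)

def HypergeometricMulOneSubPowEq (a b c p : R) (W : R⟦X⟧) : Prop :=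
  euler (euler W) + (C c - 1) * euler W =
    X * (2 * euler (euler W) + (C a + C b + C c - 2 * C p - 1) * euler W
        + (C a * C b - C c * C p) * W)
      - X ^ 2 * (euler (euler W) + (C a + C b - 2 * C p) * euler W
        + (C a - C p) * (C b - C p) * W)

variable {a b c p : R}

theorem hypergeometricEq_mk {f : ℕ → R}
    (hf : ∀ k : ℕ, ((k : R) + 1) * (k + c) * f (k + 1) = (k + a) * (k + b) * f k) :
    HypergeometricEq a b c (mk f) := by
  refine eq_X_mul_of_coeff_succ (by simp) fun k => ?_
  simp only [map_add, sub_mul, add_mul, map_sub, one_mul, mul_assoc, coeff_C_mul, coeff_euler,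
    coeff_mk]
  push_cast
  linear_combination hf k

theorem oneSubPowEq_mk {g : ℕ → R} (hg : ∀ j : ℕ, ((j : R) + 1) * g (j + 1) = (j - p) * g j) :
    OneSubPowEq p (mk g) := by
  refine eq_X_mul_of_coeff_succ (by simp) fun j => ?_
  simp only [map_sub, coeff_C_mul, coeff_euler, coeff_mk]
  push_cast
  linear_combination hg j

theorem HypergeometricEq.mul_oneSubPowEq {φ ψ : R⟦X⟧} (hφ : HypergeometricEq a b c φ)
    (hψ : OneSubPowEq p ψ) : HypergeometricMulOneSubPowEq a b c p (φ * ψ) := by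
  have hψ₂ : euler (euler ψ) =
      X * (euler ψ - C p * ψ) + X * (euler (euler ψ) - C p * euler ψ) := by
    conv_lhs => rw [hψ]
    rw [euler_X_mul, map_sub, euler_C_mul]
  unfold HypergeometricEq OneSubPowEq HypergeometricMulOneSubPowEq at *
  simp only [Derivation.leibniz, map_add, smul_eq_mul]
  -- `hψ` and `hψ₂` say `(1 - X) θψ = -p X ψ` and `(1 - X) θ²ψ = (1 - p) X θψ - p X ψ`; after
  -- eliminating `θψ` and `θ²ψ`, what remains is `(1 - X) ψ` times the equation of `φ`.
  linear_combination (1 - X) * ψ * hφ + (1 - X) * φ * hψ₂ +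
    (2 * (1 - X) * euler φ + (C c - 1 + (1 + C p - C a - C b) * X) * φ) * hψ

theorem HypergeometricMulOneSubPowEq.coeff_add_two {W : R⟦X⟧}
    (hW : HypergeometricMulOneSubPowEq a b c p W) (n : ℕ) :
    ((n : R) + 2) * (n + 1 + c) * coeff (n + 2) W =
      (2 * ((n : R) + 1) ^ 2 + (a + b + c - 2 * p - 1) * (n + 1) + a * b - c * p)
          * coeff (n + 1) W
        - (n + a - p) * (n + b - p) * coeff n W := by
  have h := congrArg (coeff (n + 2)) hW
  simp only [← map_ofNat (C (R := R)) 2, map_add, map_sub, sub_mul, add_mul, one_mul, coeff_C_mul,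
    coeff_euler, pow_two, mul_assoc, coeff_succ_X_mul] at h
  push_cast at h
  linear_combination h

end PowerSeries

noncomputable def hypergeometricTerm (a b c : ℝ) (k : ℕ) : ℝ :=
  poch a k * poch b k / (k.factorial * poch c k)

noncomputable def oneSubPowCoeff (p : ℝ) (j : ℕ) : ℝ := poch (-p) j / j.factorial

theorem poch_succ (x : ℝ) (n : ℕ) : poch x (n + 1) = poch x n * (x + n) :=
  ascPochhammer_succ_eval n x

theorem hypergeometricTerm_succ (a b : ℝ) {c : ℝ} (hc : ∀ n : ℕ, c ≠ -(n : ℝ)) (k : ℕ) :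
    ((k : ℝ) + 1) * (k + c) * hypergeometricTerm a b c (k + 1) =
      (k + a) * (k + b) * hypergeometricTerm a b c k := by
  have hck : c + k ≠ 0 := fun h => hc k (by linarith)
  have hpoch : poch c k ≠ 0 := by
    simpa [poch] using fun n (_ : n < k) h => hc n (by linarith)
  simp only [hypergeometricTerm, poch_succ, Nat.factorial_succ, Nat.cast_mul, Nat.cast_succ]
  field_simp
  ring

theorem oneSubPowCoeff_succ (p : ℝ) (j : ℕ) :
    ((j : ℝ) + 1) * oneSubPowCoeff p (j + 1) = (j - p) * oneSubPowCoeff p j := by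
  simp only [oneSubPowCoeff, poch_succ, Nat.factorial_succ, Nat.cast_mul, Nat.cast_succ]
  field_simp
  ring

theorem u_recurrence_two_term (a b c p : ℝ) (hc : ∀ n : ℕ, c ≠ -(n : ℝ))
    (u : ℕ → ℝ)
    (hu : ∀ n, u n = ∑ k ∈ Finset.range (n + 1),
      poch a k * poch b k / (k.factorial * poch c k) *
        (poch (-p) (n - k) / (n - k).factorial)) :
    u 0 = 1 ∧ u 1 = a * b / c - p ∧
      ∀ n : ℕ, 1 ≤ n →
        u (n + 1) =
          2 * ((2 * (n : ℝ) ^ 2 + (a + b + c - 2 * p - 1) * (n : ℝ) + a * b - c * p)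
              / (2 * ((n : ℝ) + 1) * ((n : ℝ) + c))) * u n
          - (((n : ℝ) + a - p - 1) * ((n : ℝ) + b - p - 1)
              / (((n : ℝ) + 1) * ((n : ℝ) + c))) * u (n - 1) := by
  have hu_coeff (n : ℕ) :
      u n = coeff n (mk (hypergeometricTerm a b c) * mk (oneSubPowCoeff p)) := by
    rw [hu, PowerSeries.coeff_mul, Finset.Nat.sum_antidiagonal_eq_sum_range_succ_mk]
    simp only [coeff_mk, hypergeometricTerm, oneSubPowCoeff]
  have hrec := ((hypergeometricEq_mk (hypergeometricTerm_succ a b hc)).mul_oneSubPowEq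
    (oneSubPowEq_mk (oneSubPowCoeff_succ p))).coeff_add_two
  refine ⟨by simp [hu, poch], by simp [hu, Finset.sum_range_succ, poch, sub_eq_neg_add],
    fun n hn => ?_⟩
  obtain ⟨m, rfl⟩ := Nat.exists_eq_add_of_le' hn
  have hmc : (m : ℝ) + 1 + c ≠ 0 := fun h => hc (m + 1) (by push_cast; linarith)
  rw [hu_coeff, hu_coeff, hu_coeff, Nat.add_sub_cancel]
  push_cast
  field_simp
  linear_combination hrec m
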